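/- arXiv:2503.20647 — 4 statements merged into one kernel-verified Lean document; each statement's English description precedes it below -/
import Mathlib

section
/- Substitution on the left-hand side is derivable in the system I1–I6: for single variables x_1, x_2, y_1 and sequences z, v with |v| = |z| + 1, the atom zx_1 ⊆ v is derivable from the two atoms x_1x_2 ⊆ y_1y_1 and zx_2 ⊆ v using rules I1–I6. -/
/-- A team `T` (set of assignments `s : V → M`) satisfies the inclusion atom
`x ⊆ y` if for every `s ∈ T` there is `s' ∈ T` with `s(xᵢ) = s'(yᵢ)` for all `i`. -/
def TeamSat {V M : Type*} (T : Set (V → M)) (x y : List V) : Prop :=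
  ∀ s ∈ T, ∃ s' ∈ T, x.map s = y.map s'

/-- The derivation system I1–I6 for inclusion atoms (with repetitions). -/
inductive Derives {V : Type*} (Γ : Set (List V × List V)) : List V → List V → Prop
  | mem {x y : List V} : (x, y) ∈ Γ → Derives Γ x y
  | I1 (x : List V) : Derives Γ x x
  | I2 {x z y : List V} : Derives Γ x z → Derives Γ z y → Derives Γ x y
  | I3 {x y z u v w : List V} :
      Derives Γ (x ++ y ++ z) (u ++ v ++ w) →
      x.length = u.length → y.length = v.length → z.length = w.length →
      Derives Γ (x ++ z ++ y) (u ++ w ++ v)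
  | I4 {x y u v : List V} :
      Derives Γ (x ++ y) (u ++ v) → x.length = u.length → Derives Γ x u
  | I5 {x y u v : List V} :
      Derives Γ (x ++ y) (u ++ v) → x.length = u.length →
      Derives Γ (x ++ y ++ y) (u ++ v ++ v)
  | I6 {x1 x2 y1 : V} {z v : List V} :
      Derives Γ [x1, x2] [y1, y1] → Derives Γ z (v ++ [x2]) →
      Derives Γ z (v ++ [x1])

namespace Derives

variable {V : Type*} {Γ : Set (List V × List V)}

theorem swap_pair {a b c d : V} (h : Derives Γ [a, b] [c, d]) : Derives Γ [b, a] [d, c] :=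
  I3 (x := []) (y := [a]) (z := [b]) (u := []) (v := [c]) (w := [d]) h rfl rfl rfl

theorem subst_left {x1 x2 y1 : V} {z v : List V} (hx : Derives Γ [x1, x2] [y1, y1])
    (hz : Derives Γ (z ++ [x2]) v) : Derives Γ (z ++ [x1]) v :=
  I2 (I6 hx.swap_pair (I1 (z ++ [x1]))) hz

end Derives

theorem left_substitution_derivable_general {V : Type*}
    (x1 x2 y1 : V) (z v : List V) :
    Derives {([x1, x2], [y1, y1]), (z ++ [x2], v)} (z ++ [x1]) v :=
  Derives.subst_left (Derives.mem (Or.inl rfl)) (Derives.mem (Or.inr rfl))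

/-- Substitution on the left-hand side is derivable in I1–I6:
from `x₁x₂ ⊆ y₁y₁` and `zx₂ ⊆ v` one derives `zx₁ ⊆ v`. -/
theorem left_substitution_derivable {V : Type*}
    (x1 x2 y1 : V) (z v : List V) (hv : v.length = z.length + 1) :
    Derives {([x1, x2], [y1, y1]), (z ++ [x2], v)} (z ++ [x1]) v :=
  left_substitution_derivable_general x1 x2 y1 z v
end

section
/- For single variables u_1, u_2, y_1 and sequences u', v' of equal length, the atom u_1u_2u' ⊆ y_1y_1v' and the pair of atoms { u_1u' ⊆ y_1v', u_1u_2 ⊆ y_1y_1 } are inter-derivable in the system I1–I6: u_1u_2u' ⊆ y_1y_1v' derives each of u_1u' ⊆ y_1v' and u_1u_2 ⊆ y_1y_1, and conversely the set { u_1u' ⊆ y_1v', u_1u_2 ⊆ y_1y_1 } derives u_1u_2u' ⊆ y_1y_1v'. -/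
/-! From `u₁u₂ ⊆ y₁y₁`, rule I6 renames `u₂` to `u₁`, giving `u₁u₂u' ⊆ u₁u₁u'`; and
`u₁u₁u' ⊆ y₁y₁v'` comes from `u₁u' ⊆ y₁v'` by doubling with I5, permuting with I3 and
projecting with I4. Chaining the two with I2 gives the converse direction. -/

namespace Derives

variable {V : Type*} {Γ : Set (List V × List V)}

theorem drop_second {a b c d : V} {x y : List V} (hxy : x.length = y.length)
    (h : Derives Γ (a :: b :: x) (c :: d :: y)) : Derives Γ (a :: x) (c :: y) :=
  have swapped : Derives Γ ([a] ++ x ++ [b]) ([c] ++ y ++ [d]) :=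
    I3 (x := [a]) (y := [b]) (u := [c]) (v := [d]) h rfl rfl hxy
  I4 swapped (by simp [hxy])

theorem dup_head {a c : V} {x y : List V} (hxy : x.length = y.length)
    (h : Derives Γ (a :: x) (c :: y)) : Derives Γ (a :: a :: x) (c :: c :: y) := by
  have doubled : Derives Γ ([] ++ (a :: x) ++ (a :: x)) ([] ++ (c :: y) ++ (c :: y)) :=
    I5 h rfl
  have swapped : Derives Γ ([a] ++ (a :: x) ++ x) ([c] ++ (c :: y) ++ y) :=
    I3 (x := [a]) (u := [c]) doubled rfl hxy (by simp [hxy])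
  exact I4 (by simpa using swapped) (by simp [hxy])

theorem cons_cons_self_of_pair {a b c : V} (x : List V) (h : Derives Γ [a, b] [c, c]) :
    Derives Γ (a :: b :: x) (a :: a :: x) :=
  have renamed : Derives Γ ([a] ++ x ++ [b]) ([a] ++ x ++ [a]) := I6 h (I1 _)
  I3 (y := x) (v := x) renamed rfl rfl rfl

end Derives

/-- `u₁u₂u' ⊆ y₁y₁v'` is inter-derivable with `{u₁u' ⊆ y₁v', u₁u₂ ⊆ y₁y₁}` in I1–I6. -/
theorem normal_form_interderivable {V : Type*}
    (u1 u2 y1 : V) (u' v' : List V) (h : u'.length = v'.length) :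
    Derives {(u1 :: u2 :: u', y1 :: y1 :: v')} (u1 :: u') (y1 :: v') ∧
    Derives {(u1 :: u2 :: u', y1 :: y1 :: v')} [u1, u2] [y1, y1] ∧
    Derives {(u1 :: u', y1 :: v'), ([u1, u2], [y1, y1])}
      (u1 :: u2 :: u') (y1 :: y1 :: v') := by
  have hatom : Derives {(u1 :: u2 :: u', y1 :: y1 :: v')} ([u1, u2] ++ u') ([y1, y1] ++ v') :=
    .mem (Set.mem_singleton _)
  refine ⟨hatom.drop_second h, hatom.I4 rfl, ?_⟩
  have rename : Derives {(u1 :: u', y1 :: v'), ([u1, u2], [y1, y1])}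
      (u1 :: u2 :: u') (u1 :: u1 :: u') :=
    Derives.cons_cons_self_of_pair (c := y1) u' (.mem (by simp))
  exact rename.I2 (.dup_head h (.mem (by simp)))
end

section
/- The axiom schema B3 is sound: let p and q be term sequences with |p| = |q| = n, and let A be a set of atoms of the form r ⊆ q with r_i ∈ {p_i, ⊤, ⊥} for all 1 ≤ i ≤ n, such that for every constant sequence 𝗑 ∈ {⊤,⊥}^n for which 𝗑 ⊆ p is consistent there exists some r ⊆ q ∈ A for which 𝗑 ⊆ r is consistent. If a Boolean team T satisfies every atom in A, then T ⊨ p ⊆ q. -/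
/-- Terms: propositional variables or the Boolean constants ⊤, ⊥. -/
inductive Term (V : Type*) where
  | var : V → Term V
  | top : Term V
  | bot : Term V

/-- Evaluation of a term under a Boolean assignment; `s(⊤) = 1` and `s(⊥) = 0`. -/
def Term.eval {V : Type*} (s : V → Bool) : Term V → Bool
  | .var v => s v
  | .top => true
  | .bot => false

/-- A Boolean team `T` satisfies the inclusion atom with Boolean constants
`p ⊆ q` if for every `s ∈ T` there is `s' ∈ T` with `s(pᵢ) = s'(qᵢ)` for all `i`. -/
def TTeamSat {V : Type*} (T : Set (V → Bool)) (p q : List (Term V)) : Prop :=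
  ∀ s ∈ T, ∃ s' ∈ T, p.map (Term.eval s) = q.map (Term.eval s')

/-- A sequence of constants from `{⊤, ⊥}`. -/
def IsConstSeq {V : Type*} (x : List (Term V)) : Prop :=
  ∀ t ∈ x, t = Term.top ∨ t = Term.bot

/-- `𝗑 ⊆ r` is consistent: the sequences have equal length, whenever `rᵢ` is a
constant then `rᵢ = 𝗑ᵢ`, and whenever `rᵢ = rⱼ` then `𝗑ᵢ = 𝗑ⱼ`. -/
def Consistent {V : Type*} (x r : List (Term V)) : Prop :=
  x.length = r.length ∧
  (∀ pr ∈ r.zip x, (pr.1 = Term.top ∨ pr.1 = Term.bot) → pr.1 = pr.2) ∧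
  (∀ pr ∈ r.zip x, ∀ pr' ∈ r.zip x, pr.1 = pr'.1 → pr.2 = pr'.2)

/-!
Given `s ∈ T`, record the values of `p` under `s` as the constant sequence `𝗑` with
`𝗑ᵢ = ⊤` iff `s(pᵢ) = 1`; it is consistent with `p`, so some `r ⊆ q` in `A` is consistent
with `𝗑`. Each `rᵢ` is either `pᵢ` or the constant `𝗑ᵢ`, so `s(r) = s(p)`, and the witness
`s'` for `r ⊆ q` serves for `p ⊆ q`.
-/

namespace Term

variable {V : Type*}

def ofBool : Bool → Term V
  | true => top
  | false => bot

@[simp]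
lemma eval_ofBool (s : V → Bool) (b : Bool) : (ofBool b : Term V).eval s = b := by
  cases b <;> rfl

lemma ofBool_eval_of_isConst (s : V → Bool) {t : Term V} (ht : t = top ∨ t = bot) :
    ofBool (t.eval s) = t := by
  rcases ht with rfl | rfl <;> rfl

end Term

section ValueSeq

variable {V : Type*}

def valueSeq (s : V → Bool) (p : List (Term V)) : List (Term V) :=
  p.map fun t => Term.ofBool (t.eval s)

lemma isConstSeq_valueSeq (s : V → Bool) (p : List (Term V)) : IsConstSeq (valueSeq s p) := by
  intro x hx
  obtain ⟨t, -, rfl⟩ := List.mem_map.mp hx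
  cases t.eval s
  · exact Or.inr rfl
  · exact Or.inl rfl

lemma consistent_valueSeq (s : V → Bool) (p : List (Term V)) : Consistent (valueSeq s p) p := by
  have hzip : p.zip (valueSeq s p) = p.map fun t => (t, Term.ofBool (t.eval s)) := by
    simpa [valueSeq] using List.zip_map' (f := id) (g := fun t => Term.ofBool (t.eval s)) (l := p)
  refine ⟨List.length_map _, ?_, ?_⟩ <;> simp only [hzip, List.mem_map]
  · rintro _ ⟨t, -, rfl⟩ ht
    exact (Term.ofBool_eval_of_isConst s ht).symm
  · rintro _ ⟨t, -, rfl⟩ _ ⟨t', -, rfl⟩ rfl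
    rfl

lemma map_eval_eq_of_consistent_valueSeq {s : V → Bool} {r p : List (Term V)}
    (hlen : r.length = p.length)
    (hrp : ∀ pr ∈ r.zip p, pr.1 = pr.2 ∨ pr.1 = Term.top ∨ pr.1 = Term.bot)
    (hx : Consistent (valueSeq s p) r) :
    r.map (Term.eval s) = p.map (Term.eval s) :=
  calc r.map (Term.eval s) = ((r.zip p).map Prod.fst).map (Term.eval s) := by
        rw [List.map_fst_zip hlen.le]
    _ = ((r.zip p).map Prod.snd).map (Term.eval s) := by
        simp only [List.map_map]
        refine List.map_congr_left fun pr hpr => show pr.1.eval s = pr.2.eval s from ?_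
        rcases hrp pr hpr with hvar | hconst
        · exact congrArg (Term.eval s) hvar
        · have hmem : (pr.1, Term.ofBool (pr.2.eval s)) ∈ r.zip (valueSeq s p) := by
            rw [valueSeq, List.zip_map_right]
            exact List.mem_map_of_mem hpr
          have hr : pr.1 = Term.ofBool (pr.2.eval s) := hx.2.1 _ hmem hconst
          rw [hr, Term.eval_ofBool]
    _ = p.map (Term.eval s) := by rw [List.map_snd_zip hlen.ge]

end ValueSeq

theorem B3_sound_general {V : Type*} (p q : List (Term V))
    (A : Set (List (Term V)))
    (hA : ∀ r ∈ A, r.length = p.length ∧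
      ∀ pr ∈ r.zip p, pr.1 = pr.2 ∨ pr.1 = Term.top ∨ pr.1 = Term.bot)
    (hcov : ∀ x : List (Term V), IsConstSeq x → Consistent x p →
      ∃ r ∈ A, Consistent x r)
    (T : Set (V → Bool)) (hT : ∀ r ∈ A, TTeamSat T r q) :
    TTeamSat T p q := by
  intro s hs
  obtain ⟨r, hrA, hr⟩ := hcov (valueSeq s p) (isConstSeq_valueSeq s p) (consistent_valueSeq s p)
  obtain ⟨hlen, hrp⟩ := hA r hrA
  obtain ⟨s', hs', heq⟩ := hT r hrA s hs
  exact ⟨s', hs', (map_eval_eq_of_consistent_valueSeq hlen hrp hr).symm.trans heq⟩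

/-- Soundness of the axiom schema B3. -/
theorem B3_sound {V : Type*} (p q : List (Term V)) (hpq : p.length = q.length)
    (A : Set (List (Term V)))
    (hA : ∀ r ∈ A, r.length = p.length ∧
      ∀ pr ∈ r.zip p, pr.1 = pr.2 ∨ pr.1 = Term.top ∨ pr.1 = Term.bot)
    (hcov : ∀ x : List (Term V), IsConstSeq x → Consistent x p →
      ∃ r ∈ A, Consistent x r)
    (T : Set (V → Bool)) (hT : ∀ r ∈ A, TTeamSat T r q) :
    TTeamSat T p q :=
  B3_sound_general p q A hA hcov T hT
end

section
/- Soundness of the rule (*): let n ≥ 1, let p = p_1…p_n and q = q_1…q_n be sequences of propositional variables with all 2n variables pairwise distinct, and let B = { ⊥^n ⊆ q } ∪ { r ⊆ q : there is exactly one i ∈ {1,…,n} with r_i = ⊤ and r_j = p_j for all j ≠ i }. Then every Boolean team satisfying all n+1 atoms of B satisfies p ⊆ q, i.e., B ⊨_bool p ⊆ q. -/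
/-- The left-hand sides of the assumption set `B` of the rule (*): `⊥ⁿ`,
together with, for each `i < n`, the sequence agreeing with `p` except for a
single `⊤` at position `i` (so each such `r` has exactly one `i` with `rᵢ = ⊤`
and `rⱼ = pⱼ` for `j ≠ i`). Each `r` here stands for the atom `r ⊆ q`. -/
def starAssumptions {V : Type*} (n : ℕ) (p : List V) : Set (List (Term V)) :=
  insert (List.replicate n Term.bot)
    {r | ∃ i < n, r = (p.map Term.var).set i Term.top}

/-!
Fix `s ∈ T`. If `s` makes some `pᵢ` true, then the assumption with `⊤` at position `i`
has the same value under `s` as `p`; otherwise `s` makes all of `p` false, and `⊥ⁿ`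
has the same value as `p`. Either way an assumption `r ⊆ q` with `s(r) = s(p)`
supplies the required `s' ∈ T` with `s'(q) = s(p)`.
-/

theorem List.map_set_of_apply_eq {α β : Type*} (f : α → β) (l : List α) {i : ℕ}
    (hi : i < l.length) {a : α} (ha : f a = f l[i]) : (l.set i a).map f = l.map f := by
  have hi' : i < (l.map f).length := by simpa using hi
  rw [List.map_set, ha, ← List.getElem_map f (h := hi')]
  exact List.set_getElem_self hi'

namespace Term

variable {V : Type*}

theorem map_eval_set_top {s : V → Bool} (l : List (Term V)) {i : ℕ} (hi : i < l.length)
    (h : l[i].eval s = true) : (l.set i .top).map (eval s) = l.map (eval s) :=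
  List.map_set_of_apply_eq _ l hi h.symm

theorem map_eval_replicate_bot {s : V → Bool} (p : List V) (h : ∀ v ∈ p, s v = false) :
    (List.replicate p.length .bot).map (eval s) = (p.map var).map (eval s) := by
  simpa [Function.comp_def, eval] using (List.map_eq_replicate_iff.mpr h).symm

end Term

theorem exists_mem_starAssumptions_map_eval_eq {V : Type*} (s : V → Bool) (p : List V) :
    ∃ r ∈ starAssumptions p.length p, r.map (Term.eval s) = (p.map Term.var).map (Term.eval s) := by
  by_cases htrue : ∃ v ∈ p, s v = true
  · obtain ⟨v, hv, hsv⟩ := htrue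
    obtain ⟨i, hi, rfl⟩ := List.mem_iff_getElem.mp hv
    refine ⟨(p.map Term.var).set i .top, Or.inr ⟨i, hi, rfl⟩, ?_⟩
    exact Term.map_eval_set_top _ (by simpa using hi) (by simpa [Term.eval] using hsv)
  · push Not at htrue
    exact ⟨_, Or.inl rfl, Term.map_eval_replicate_bot p (by simpa using htrue)⟩

theorem star_rule_sound_general {V : Type*} (n : ℕ)
    (p q : List V) (hp : p.length = n) :
    ∀ T : Set (V → Bool),
      (∀ r ∈ starAssumptions n p, TTeamSat T r (q.map Term.var)) →
      TTeamSat T (p.map Term.var) (q.map Term.var) := by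
  intro T hB s hs
  subst hp
  obtain ⟨r, hr, hrs⟩ := exists_mem_starAssumptions_map_eval_eq s p
  rw [← hrs]
  exact hB r hr s hs

/-- Soundness of the rule (*): the `n + 1` assumptions of `B` entail `p ⊆ q`. -/
theorem star_rule_sound {V : Type*} (n : ℕ) (hn : 1 ≤ n)
    (p q : List V) (hp : p.length = n) (hq : q.length = n)
    (hdist : (p ++ q).Nodup) :
    ∀ T : Set (V → Bool),
      (∀ r ∈ starAssumptions n p, TTeamSat T r (q.map Term.var)) →
      TTeamSat T (p.map Term.var) (q.map Term.var) :=
  star_rule_sound_general n p q hp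
end
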